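/- arXiv:2111.00839 — 2 statements merged into one kernel-verified Lean document; each statement's English description precedes it below -/
import Mathlib

section
/- Let d, f, g be real numbers with d ≥ 1, f > 0, g > 0, define σ*(h) = (√(h²(h²(d²−1)² + 2f²g²(d²+1)) + f⁴g⁴) + h²(d²−1) + f²g²)/(2g²) and the steady-state Kalman gain K(h) = d g σ*(h)/(g²σ*(h) + h²). Then K(0) = d/g and K(h) ≤ d/g for every real h, i.e., the Kalman gain attains its global maximum at zero signal noise h = 0. -/
/-! Since `σ*(h) > 0`, adding `h² ≥ 0` to the denominator `g²σ*(h)` can only lower the gain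
below `dgσ*(h)/(g²σ*(h)) = d/g`. At `h = 0` the square root collapses to `f²g²`, so
`σ*(0) = f²` and the bound is attained. -/

section KalmanGain

variable {d f g σ : ℝ}

theorem steadyStateVariance_pos (hd : 1 ≤ d ^ 2) (hf : f ≠ 0) (hg : g ≠ 0) (h : ℝ) :
    0 < (Real.sqrt (h ^ 2 * (h ^ 2 * (d ^ 2 - 1) ^ 2 + 2 * f ^ 2 * g ^ 2 * (d ^ 2 + 1))
      + f ^ 4 * g ^ 4) + h ^ 2 * (d ^ 2 - 1) + f ^ 2 * g ^ 2) / (2 * g ^ 2) := by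
  have hsqrt := Real.sqrt_nonneg
    (h ^ 2 * (h ^ 2 * (d ^ 2 - 1) ^ 2 + 2 * f ^ 2 * g ^ 2 * (d ^ 2 + 1)) + f ^ 4 * g ^ 4)
  have hdrift : 0 ≤ h ^ 2 * (d ^ 2 - 1) := mul_nonneg (sq_nonneg h) (by linarith)
  positivity

theorem steadyStateVariance_zero (f : ℝ) (hg : g ≠ 0) :
    (Real.sqrt ((0 : ℝ) ^ 2 * ((0 : ℝ) ^ 2 * (d ^ 2 - 1) ^ 2 + 2 * f ^ 2 * g ^ 2 * (d ^ 2 + 1))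
      + f ^ 4 * g ^ 4) + (0 : ℝ) ^ 2 * (d ^ 2 - 1) + f ^ 2 * g ^ 2) / (2 * g ^ 2) = f ^ 2 := by
  have hsqrt : Real.sqrt ((0 : ℝ) ^ 2 * ((0 : ℝ) ^ 2 * (d ^ 2 - 1) ^ 2
      + 2 * f ^ 2 * g ^ 2 * (d ^ 2 + 1)) + f ^ 4 * g ^ 4) = f ^ 2 * g ^ 2 := by
    rw [← Real.sqrt_sq (by positivity : 0 ≤ f ^ 2 * g ^ 2)]
    ring_nf
  rw [hsqrt]
  field_simp
  ring

theorem gain_le_div (hd : 0 ≤ d) (hg : 0 < g) (hσ : 0 < σ) (h : ℝ) :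
    d * g * σ / (g ^ 2 * σ + h ^ 2) ≤ d / g :=
  calc d * g * σ / (g ^ 2 * σ + h ^ 2)
      ≤ d * g * σ / (g ^ 2 * σ) :=
        div_le_div_of_nonneg_left (by positivity) (by positivity) (by nlinarith [sq_nonneg h])
    _ = d / g := by field_simp

theorem gain_zero_noise (hg : g ≠ 0) (hσ : σ ≠ 0) :
    d * g * σ / (g ^ 2 * σ + 0 ^ 2) = d / g := by
  rw [zero_pow two_ne_zero, add_zero]
  field_simp

end KalmanGain

/-- The steady-state Kalman gain `K(h) = dgσ*(h)/(g²σ*(h) + h²)` attains its global maximum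
`d/g` at zero signal noise `h = 0`. -/
theorem kalman_gain_max_at_zero_noise (d f g : ℝ)
    (hd : 1 ≤ d) (hf : 0 < f) (hg : 0 < g)
    (σstar K : ℝ → ℝ)
    (hσ : ∀ h : ℝ, σstar h =
      (Real.sqrt (h ^ 2 * (h ^ 2 * (d ^ 2 - 1) ^ 2 + 2 * f ^ 2 * g ^ 2 * (d ^ 2 + 1))
        + f ^ 4 * g ^ 4) + h ^ 2 * (d ^ 2 - 1) + f ^ 2 * g ^ 2) / (2 * g ^ 2))
    (hK : ∀ h : ℝ, K h = d * g * σstar h / (g ^ 2 * σstar h + h ^ 2)) :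
    K 0 = d / g ∧ ∀ h : ℝ, K h ≤ d / g := by
  have hσ_pos : ∀ h, 0 < σstar h := fun h =>
    hσ h ▸ steadyStateVariance_pos (by nlinarith) hf.ne' hg.ne' h
  refine ⟨?_, fun h => hK h ▸ gain_le_div (by linarith) hg (hσ_pos h) h⟩
  rw [hK 0, hσ 0, steadyStateVariance_zero f hg.ne']
  exact gain_zero_noise hg.ne' (by positivity)
end

section
/- Let d, f, g be real numbers with d > 1, f > 0, g > 0, define σ*(h) = (√(h²(h²(d²−1)² + 2f²g²(d²+1)) + f⁴g⁴) + h²(d²−1) + f²g²)/(2g²) and K(h) = d g σ*(h)/(g²σ*(h) + h²). Then the steady-state Kalman gain converges to a positive constant as the signal noise grows: lim_{h→∞} K(h) = (d²−1)/(d g). -/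
/-!
Dividing by `h²`, the steady-state variance satisfies `σ*(h) / h² → (d² − 1) / g²`, because the
square root is dominated by its leading term `h² (d² − 1)`. Writing the gain as
`K(h) = d g (σ*(h)/h²) / (g² σ*(h)/h² + 1)`, it tends to `d g s / (g² s + 1)` with
`s = (d² − 1) / g²`, which is `(d² − 1) / (d g)`.
-/

open Filter Topology

noncomputable def steadyStateVariance (d f g h : ℝ) : ℝ :=
  (√(h ^ 2 * (h ^ 2 * (d ^ 2 - 1) ^ 2 + 2 * f ^ 2 * g ^ 2 * (d ^ 2 + 1)) + f ^ 4 * g ^ 4)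
    + h ^ 2 * (d ^ 2 - 1) + f ^ 2 * g ^ 2) / (2 * g ^ 2)

lemma tendsto_inv_sq_atTop_zero : Tendsto (fun x : ℝ => (x ^ 2)⁻¹) atTop (𝓝 0) :=
  (tendsto_pow_atTop two_ne_zero).inv_tendsto_atTop

lemma tendsto_sqrt_quartic_div_sq (a b c : ℝ) :
    Tendsto (fun x : ℝ => √(a * x ^ 4 + b * x ^ 2 + c) / x ^ 2) atTop (𝓝 √a) := by
  have hlim : Tendsto (fun x : ℝ => a + b * (x ^ 2)⁻¹ + c * ((x ^ 2)⁻¹) ^ 2) atTop (𝓝 a) := by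
    simpa using ((tendsto_inv_sq_atTop_zero.const_mul b).const_add a).add
      ((tendsto_inv_sq_atTop_zero.pow 2).const_mul c)
  refine (Real.continuous_sqrt.tendsto a |>.comp hlim).congr' ?_
  filter_upwards [eventually_ne_atTop 0] with x hx
  have hx2 : x ^ 2 ≠ 0 := pow_ne_zero 2 hx
  rw [Function.comp_apply, ← Real.sqrt_sq (sq_nonneg x), ← Real.sqrt_div' _ (sq_nonneg _),
    Real.sqrt_sq (sq_nonneg x)]
  congr 1
  field_simp

lemma tendsto_steadyStateVariance_div_sq (d f g : ℝ) (hd : 1 ≤ d ^ 2) :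
    Tendsto (fun h => steadyStateVariance d f g h / h ^ 2) atTop (𝓝 ((d ^ 2 - 1) / g ^ 2)) := by
  have hsqrt := tendsto_sqrt_quartic_div_sq ((d ^ 2 - 1) ^ 2) (2 * f ^ 2 * g ^ 2 * (d ^ 2 + 1))
    (f ^ 4 * g ^ 4)
  rw [Real.sqrt_sq (by linarith)] at hsqrt
  have hlim := ((hsqrt.add_const (d ^ 2 - 1)).add
    (tendsto_inv_sq_atTop_zero.const_mul (f ^ 2 * g ^ 2))).div_const (2 * g ^ 2)
  rw [mul_zero, add_zero, ← two_mul, mul_div_mul_left _ _ two_ne_zero] at hlim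
  refine hlim.congr' ?_
  filter_upwards [eventually_ne_atTop 0] with h hh
  have hh2 : h ^ 2 ≠ 0 := pow_ne_zero 2 hh
  simp only [steadyStateVariance]
  field_simp

lemma tendsto_gain_of_tendsto_div_sq {σ : ℝ → ℝ} {a b s : ℝ}
    (hσ : Tendsto (fun h => σ h / h ^ 2) atTop (𝓝 s)) (hs : b * s + 1 ≠ 0) :
    Tendsto (fun h => a * σ h / (b * σ h + h ^ 2)) atTop (𝓝 (a * s / (b * s + 1))) := by
  refine ((hσ.const_mul a).div ((hσ.const_mul b).add_const 1) hs).congr' ?_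
  filter_upwards [eventually_ne_atTop 0] with h hh
  have hh2 : h ^ 2 ≠ 0 := pow_ne_zero 2 hh
  simp only [Pi.div_apply]
  field_simp

theorem kalman_gain_limit_large_noise_general (d f g : ℝ)
    (hd : 1 < d) (hg : 0 < g)
    (σstar K : ℝ → ℝ)
    (hσ : ∀ h : ℝ, σstar h =
      (Real.sqrt (h ^ 2 * (h ^ 2 * (d ^ 2 - 1) ^ 2 + 2 * f ^ 2 * g ^ 2 * (d ^ 2 + 1))
        + f ^ 4 * g ^ 4) + h ^ 2 * (d ^ 2 - 1) + f ^ 2 * g ^ 2) / (2 * g ^ 2))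
    (hK : ∀ h : ℝ, K h = d * g * σstar h / (g ^ 2 * σstar h + h ^ 2)) :
    Tendsto K atTop (nhds ((d ^ 2 - 1) / (d * g))) := by
  rw [show K = fun h => d * g * σstar h / (g ^ 2 * σstar h + h ^ 2) from funext hK,
    show σstar = steadyStateVariance d f g from funext hσ]
  have hden : g ^ 2 * ((d ^ 2 - 1) / g ^ 2) + 1 = d ^ 2 := by field_simp; ring
  have hlim := tendsto_gain_of_tendsto_div_sq (a := d * g)
    (tendsto_steadyStateVariance_div_sq d f g (by nlinarith)) (by rw [hden]; positivity)
  rw [hden] at hlim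
  convert hlim using 2
  field_simp

/-- As the signal noise grows, the steady-state Kalman gain converges to the positive
constant `(d² − 1)/(dg)`. -/
theorem kalman_gain_limit_large_noise (d f g : ℝ)
    (hd : 1 < d) (hf : 0 < f) (hg : 0 < g)
    (σstar K : ℝ → ℝ)
    (hσ : ∀ h : ℝ, σstar h =
      (Real.sqrt (h ^ 2 * (h ^ 2 * (d ^ 2 - 1) ^ 2 + 2 * f ^ 2 * g ^ 2 * (d ^ 2 + 1))
        + f ^ 4 * g ^ 4) + h ^ 2 * (d ^ 2 - 1) + f ^ 2 * g ^ 2) / (2 * g ^ 2))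
    (hK : ∀ h : ℝ, K h = d * g * σstar h / (g ^ 2 * σstar h + h ^ 2)) :
    Tendsto K atTop (nhds ((d ^ 2 - 1) / (d * g))) :=
  kalman_gain_limit_large_noise_general d f g hd hg σstar K hσ hK
end
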